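/- Let n be a natural number with n ≥ 10 and let α be a real number with α ≥ n. Define θ(x) = 1 / (1 + e^{-αx}). Then θ(1/4) - θ(-3/4) - n · (θ(5/4) - θ(1/4)) > 0; equivalently, (1 + e^{-α/4})^{-1} - (1 + e^{3α/4})^{-1} - n·((1 + e^{-5α/4})^{-1} - (1 + e^{-α/4})^{-1}) > 0. -/
import Mathlib

theorem exact_satisfaction_beats_oversatisfaction (n : ℕ) (hn : 10 ≤ n) (α : ℝ)
    (hα : (n : ℝ) ≤ α) :
    0 < (1 + Real.exp (-α / 4))⁻¹ - (1 + Real.exp (3 * α / 4))⁻¹ -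
        (n : ℝ) * ((1 + Real.exp (-5 * α / 4))⁻¹ - (1 + Real.exp (-α / 4))⁻¹) := by
  have hα10 : (10:ℝ) ≤ α := le_trans (by exact_mod_cast hn) hα
  set a := Real.exp (-α / 4) with ha_def
  set b := Real.exp (-5 * α / 4) with hb_def
  set c := Real.exp (3 * α / 4) with hc_def
  have ha0 : 0 < a := Real.exp_pos _
  have hb0 : 0 < b := Real.exp_pos _
  have hc0 : 0 < c := Real.exp_pos _
  -- e25 = exp(-5/2)
  set e25 := Real.exp (-5/2 : ℝ) with he25_def
  have he25pos : 0 < e25 := Real.exp_pos _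
  have ha_le : a ≤ e25 := Real.exp_le_exp.mpr (by linarith)
  -- exp(5/2) > 12, hence e25 < 1/12
  have hE : (12:ℝ) < Real.exp (5/2 : ℝ) := by
    have h1 : (2.7182818283 : ℝ) < Real.exp 1 := Real.exp_one_gt_d9
    have hadd : Real.exp (1/2 : ℝ) * Real.exp (1/2 : ℝ) = Real.exp 1 := by
      rw [← Real.exp_add]; norm_num
    have hhalf : (1.64 : ℝ) < Real.exp (1/2 : ℝ) := by
      nlinarith [Real.exp_pos (1/2 : ℝ)]
    have hsplit : Real.exp (5/2 : ℝ) = Real.exp 1 * Real.exp 1 * Real.exp (1/2) := by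
      rw [← Real.exp_add, ← Real.exp_add]; norm_num
    nlinarith [Real.exp_pos (1/2 : ℝ), Real.exp_pos (1:ℝ)]
  have he25_small : e25 < 1/12 := by
    have : e25 * Real.exp (5/2 : ℝ) = 1 := by
      rw [he25_def, ← Real.exp_add]; norm_num
    nlinarith
  -- key: α * a ≤ 10 * e25
  have hkey : α * a ≤ 10 * e25 := by
    have h1 : (α - 10)/4 + 1 ≤ Real.exp ((α - 10)/4) := Real.add_one_le_exp _
    have h2 : α ≤ 10 * Real.exp ((α - 10)/4) := by nlinarith
    have h3 : Real.exp ((α - 10)/4) * a = e25 := by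
      rw [ha_def, he25_def, ← Real.exp_add]; ring_nf
    calc α * a ≤ (10 * Real.exp ((α - 10)/4)) * a :=
          mul_le_mul_of_nonneg_right h2 ha0.le
      _ = 10 * e25 := by rw [mul_assoc, h3]
  -- B ≤ a^3
  have hac : (1:ℝ) ≤ a * c := by
    rw [ha_def, hc_def, ← Real.exp_add]
    calc (1:ℝ) = Real.exp 0 := Real.exp_zero.symm
      _ ≤ _ := Real.exp_le_exp.mpr (by linarith)
  have hB : (1 + c)⁻¹ ≤ a := by
    rw [inv_le_iff_one_le_mul₀ (by linarith)]
    nlinarith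
  -- A ≥ 1 - a
  have hAinv : (1 + a)⁻¹ * (1 + a) = 1 := inv_mul_cancel₀ (by linarith)
  have hA : 1 - a ≤ (1 + a)⁻¹ := by nlinarith
  -- C ≤ 1
  have hC : (1 + b)⁻¹ ≤ 1 := by
    rw [inv_le_one_iff₀]; right; linarith
  -- n * (C - A) ≤ α * a
  have hn0 : (0:ℝ) ≤ (n:ℝ) := Nat.cast_nonneg n
  have hdiff : (1 + b)⁻¹ - (1 + a)⁻¹ ≤ a := by linarith
  have hmul : (n:ℝ) * ((1 + b)⁻¹ - (1 + a)⁻¹) ≤ α * a := by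
    calc (n:ℝ) * ((1 + b)⁻¹ - (1 + a)⁻¹) ≤ (n:ℝ) * a :=
          mul_le_mul_of_nonneg_left hdiff hn0
      _ ≤ α * a := mul_le_mul_of_nonneg_right hα ha0.le
  -- assemble
  have hB' : (1 + c)⁻¹ ≤ e25 := le_trans hB ha_le
  nlinarith [hA, hB', hmul, hkey, ha_le, he25_small, he25pos]
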